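/- arXiv:1508.02247 — 5 statements merged into one kernel-verified Lean document; each statement's English description precedes it below -/
import Mathlib

section
/- Let X be a vertex-transitive locally finite connected graph and Z a graph that is R-locally X (every ball of radius R in Z is isometric, in its intrinsic geodesic metric, to some ball of radius R in X). If p : Z → X is a graph covering map, then the restriction of p to any ball of radius R in Z is an isometry onto the ball of radius R around the image point. -/
/-- A covering map of simple graphs: a graph homomorphism restricting to a
bijection from the neighbor set (star) of each vertex onto the neighbor set of
its image. -/
def IsGraphCovering {V W : Type*} (G : SimpleGraph V) (G' : SimpleGraph W)
    (f : V → W) : Prop :=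
  (∀ a b, G.Adj a b → G'.Adj (f a) (f b)) ∧
    ∀ v, Set.BijOn f (G.neighborSet v) (G'.neighborSet (f v))

/-- The automorphism group acts transitively on vertices. -/
def VertexTransitive {V : Type*} (G : SimpleGraph V) : Prop :=
  ∀ u v : V, ∃ φ : G ≃g G, φ u = v

/-- `Z` is `R`-locally `X`: every ball of radius `R` in `Z`, with its intrinsic
(induced subgraph) geodesic metric, is isometric to some ball of radius `R` in `X`. -/
def RLocally {VZ VX : Type*} (Z : SimpleGraph VZ) (X : SimpleGraph VX) (R : ℕ) : Prop :=
  ∀ z : VZ, ∃ x : VX,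
    ∃ e : {w : VZ | Z.dist z w ≤ R} ≃ {w : VX | X.dist x w ≤ R},
      ∀ a b : {w : VZ | Z.dist z w ≤ R},
        (Z.induce {w : VZ | Z.dist z w ≤ R}).dist a b
          = (X.induce {w : VX | X.dist x w ≤ R}).dist (e a) (e b)

/-!
The covering map `p` is `1`-Lipschitz and, by lifting geodesics, maps the ball `B_Z(z, R)` onto
`B_X(p z, R)`. By the `R`-local hypothesis and vertex transitivity these two balls are isometric,
so they are finite of the same size and carry the same sum of pairwise distances. Hence `p` is a
bijection between them that can only shrink distances yet preserves their sum, so it preserves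
every distance.
-/

open SimpleGraph

theorem Equiv.eq_of_le_of_isometry {α β M : Type*} [Finite α] [AddCommMonoid M] [PartialOrder M]
    [IsOrderedCancelAddMonoid M] {d : α → α → M} {d' : β → β → M} (F f : α ≃ β)
    (hF : ∀ a b, d' (F a) (F b) ≤ d a b) (hf : ∀ a b, d' (f a) (f b) = d a b) (a b : α) :
    d' (F a) (F b) = d a b := by
  have := Fintype.ofFinite α
  have := Fintype.ofEquiv α F
  have hsum : ∑ q : α × α, d' (F q.1) (F q.2) = ∑ q : α × α, d q.1 q.2 := calc
    _ = ∑ q : β × β, d' q.1 q.2 := (F.prodCongr F).sum_comp fun q => d' q.1 q.2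
    _ = ∑ q : α × α, d' (f q.1) (f q.2) := ((f.prodCongr f).sum_comp fun q => d' q.1 q.2).symm
    _ = ∑ q : α × α, d q.1 q.2 := Finset.sum_congr rfl fun q _ => hf q.1 q.2
  exact (Finset.sum_eq_sum_iff_of_le fun q _ => hF q.1 q.2).mp hsum (a, b) (Finset.mem_univ _)

namespace SimpleGraph

variable {V W : Type*} {G : SimpleGraph V} {G' : SimpleGraph W}

theorem Hom.dist_le (f : G →g G') {u v : V} (h : G.Reachable u v) :
    G'.dist (f u) (f v) ≤ G.dist u v := by
  obtain ⟨q, hq⟩ := h.exists_walk_length_eq_dist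
  simpa [hq] using SimpleGraph.dist_le (q.map f)

theorem Iso.dist_eq (φ : G ≃g G') (u v : V) : G'.dist (φ u) (φ v) = G.dist u v := by
  by_cases h : G.Reachable u v
  · refine le_antisymm (φ.toHom.dist_le h) ?_
    simpa using φ.symm.toHom.dist_le ((Iso.reachable_iff (φ := φ)).mpr h)
  · rw [dist_eq_zero_of_not_reachable h,
      dist_eq_zero_of_not_reachable (mt Iso.reachable_iff.mp h)]

theorem Iso.bijOn_closedBall (φ : G ≃g G') (v : V) (r : ℕ) :
    Set.BijOn φ {w | G.dist v w ≤ r} {w | G'.dist (φ v) w ≤ r} := by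
  refine ⟨fun w hw => ?_, φ.injective.injOn, fun w hw => ⟨φ.symm w, ?_, φ.apply_symm_apply w⟩⟩
  · exact (φ.dist_eq v w).trans_le hw
  · change G.dist v (φ.symm w) ≤ r
    rwa [← φ.dist_eq, φ.apply_symm_apply]

theorem Hom.mapsTo_closedBall (f : G →g G') (hG : G.Preconnected) (v : V) (r : ℕ) :
    Set.MapsTo f {w | G.dist v w ≤ r} {w | G'.dist (f v) w ≤ r} :=
  fun w hw => (f.dist_le (hG v w)).trans hw

theorem Hom.injective_and_dist_eq_of_surjective [Finite V] (hG : G.Preconnected) (f : G →g G')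
    (hf : Function.Surjective f) (e : V ≃ W) (he : ∀ a b, G'.dist (e a) (e b) = G.dist a b) :
    Function.Injective f ∧ ∀ a b, G'.dist (f a) (f b) = G.dist a b := by
  have hinj : Function.Injective f := (Finite.injective_iff_surjective_of_equiv e).mpr hf
  exact ⟨hinj, (Equiv.ofBijective f ⟨hinj, hf⟩).eq_of_le_of_isometry e
    (fun a b => f.dist_le (hG a b)) he⟩

theorem exists_adj_dist_add_one_eq {z w : V} (h : G.dist z w ≠ 0) :
    ∃ y, G.Adj y w ∧ G.dist z y + 1 = G.dist z w := by
  rw [dist_comm] at h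
  obtain ⟨q, hq⟩ := exists_walk_of_dist_ne_zero h
  cases q with
  | nil => simp at h
  | cons hwy q =>
    have hyz : G.dist z _ ≤ q.length := dist_comm.trans_le (dist_le q)
    have hzw := hwy.symm.reachable.dist_triangle_right z
    rw [dist_eq_one_iff_adj.mpr hwy.symm] at hzw
    rw [Walk.length_cons, dist_comm] at hq
    exact ⟨_, hwy.symm, by omega⟩

theorem Connected.finite_closedBall (hG : G.Connected) (hlf : ∀ v, (G.neighborSet v).Finite)
    (v : V) (r : ℕ) : {w | G.dist v w ≤ r}.Finite := by
  induction r with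
  | zero =>
    refine (Set.finite_singleton v).subset fun w hw => ?_
    exact (hG.dist_eq_zero_iff.mp (Nat.le_zero.mp hw)).symm
  | succ r ih =>
    refine (ih.union (ih.biUnion fun y _ => hlf y)).subset fun w hw => ?_
    have hw : G.dist v w ≤ r + 1 := hw
    by_cases hwr : G.dist v w ≤ r
    · exact Or.inl hwr
    · obtain ⟨y, hyw, hy⟩ := exists_adj_dist_add_one_eq (show G.dist v w ≠ 0 by omega)
      exact Or.inr (Set.mem_biUnion (show G.dist v y ≤ r by omega) hyw)

theorem Connected.preconnected_induce_closedBall (hG : G.Connected) (v : V) (r : ℕ) :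
    (G.induce {w | G.dist v w ≤ r}).Preconnected := by
  suffices h : ∀ n, ∀ w (hw : G.dist v w ≤ r), G.dist v w = n →
      (G.induce {w | G.dist v w ≤ r}).Reachable ⟨v, by simp⟩ ⟨w, hw⟩ from
    fun a b => (h _ a.1 a.2 rfl).symm.trans (h _ b.1 b.2 rfl)
  intro n
  induction n with
  | zero =>
    intro w hw h0
    obtain rfl := (hG.dist_eq_zero_iff.mp h0).symm
    rfl
  | succ n ih =>
    intro w hw hn
    obtain ⟨y, hyw, hy⟩ := exists_adj_dist_add_one_eq (show G.dist v w ≠ 0 by omega)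
    exact (ih y (by omega) (by omega)).trans (Adj.reachable (G := G.induce _) hyw)

theorem VertexTransitive.nonempty_iso_induce_closedBall (hG : VertexTransitive G) (u v : V)
    (r : ℕ) : Nonempty (G.induce {w | G.dist u w ≤ r} ≃g G.induce {w | G.dist v w ≤ r}) := by
  obtain ⟨φ, rfl⟩ := hG u v
  exact ⟨φ.induce (φ.bijOn_closedBall u r)⟩

end SimpleGraph

namespace IsGraphCovering

variable {VZ VX : Type*} {Z : SimpleGraph VZ} {X : SimpleGraph VX} {p : VZ → VX}

def toHom (hp : IsGraphCovering Z X p) : Z →g X := ⟨p, hp.1 _ _⟩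

theorem exists_walk_lift (hp : IsGraphCovering Z X p) {u x : VX} (W : X.Walk u x) (z : VZ)
    (hz : p z = u) : ∃ v, p v = x ∧ ∃ q : Z.Walk z v, q.length = W.length := by
  induction W generalizing z with
  | nil => exact ⟨z, hz, .nil, rfl⟩
  | cons hadj W ih =>
    subst hz
    obtain ⟨z', hzz' : Z.Adj z z', rfl⟩ := (hp.2 z).surjOn hadj
    obtain ⟨v, hv, q, hq⟩ := ih z' rfl
    exact ⟨v, hv, .cons hzz' q, by simp [hq]⟩

theorem surjOn_closedBall (hp : IsGraphCovering Z X p) (hX : X.Preconnected) (z : VZ) (r : ℕ) :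
    Set.SurjOn p {w | Z.dist z w ≤ r} {w | X.dist (p z) w ≤ r} := by
  intro x hx
  obtain ⟨W, hW⟩ := (hX (p z) x).exists_walk_length_eq_dist
  obtain ⟨v, hv, q, hq⟩ := hp.exists_walk_lift W z rfl
  exact ⟨v, (dist_le q).trans (hq.trans hW).le |>.trans hx, hv⟩

end IsGraphCovering

/-- If `X` is a vertex-transitive locally finite connected graph, `Z` is a
connected graph which is `R`-locally `X`, and `p : Z → X` is a covering map,
then `p` restricted to any ball of radius `R` in `Z` is an isometry onto the
ball of radius `R` around the image point. -/
theorem covering_isometric_on_balls {VZ VX : Type*}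
    (X : SimpleGraph VX) (Z : SimpleGraph VZ) (R : ℕ)
    (hXt : VertexTransitive X) (hXlf : ∀ v, (X.neighborSet v).Finite)
    (hXc : X.Connected) (hZc : Z.Connected)
    (hloc : RLocally Z X R)
    (p : VZ → VX) (hp : IsGraphCovering Z X p) :
    ∀ z : VZ,
      Set.BijOn p {w | Z.dist z w ≤ R} {w | X.dist (p z) w ≤ R} ∧
      ∀ (a b : VZ) (ha : a ∈ {w | Z.dist z w ≤ R}) (hb : b ∈ {w | Z.dist z w ≤ R})
        (ha' : p a ∈ {w | X.dist (p z) w ≤ R}) (hb' : p b ∈ {w | X.dist (p z) w ≤ R}),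
        (Z.induce {w | Z.dist z w ≤ R}).dist ⟨a, ha⟩ ⟨b, hb⟩
          = (X.induce {w | X.dist (p z) w ≤ R}).dist ⟨p a, ha'⟩ ⟨p b, hb'⟩ := by
  intro z
  obtain ⟨x, e, he⟩ := hloc z
  obtain ⟨ψ⟩ := hXt.nonempty_iso_induce_closedBall x (p z) R
  have : Finite {w | X.dist (p z) w ≤ R} := (hXc.finite_closedBall hXlf (p z) R).to_subtype
  have : Finite {w | Z.dist z w ≤ R} := .of_equiv _ (e.trans ψ.toEquiv).symm
  have hmaps := hp.toHom.mapsTo_closedBall hZc.preconnected z R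
  have hsurj := hp.surjOn_closedBall hXc.preconnected z R
  obtain ⟨hinj, hdist⟩ := (induceHom hp.toHom hmaps).injective_and_dist_eq_of_surjective
    (hZc.preconnected_induce_closedBall z R) (hmaps.restrict_surjective_iff.mpr hsurj)
    (e.trans ψ.toEquiv) fun a b => (ψ.dist_eq _ _).trans (he a b).symm
  exact ⟨⟨hmaps, hmaps.restrict_inj.mp hinj, hsurj⟩,
    fun a b ha hb _ _ => (hdist ⟨a, ha⟩ ⟨b, hb⟩).symm⟩
end

section
/- Every self-covering map p : X → X of a vertex-transitive locally finite connected graph X is an automorphism of X. -/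
namespace SelfCoveringAux

variable {V : Type*} {X : SimpleGraph V}

/-- The ball of radius `r` around `v` (w.r.t. graph distance). -/
def ball (X : SimpleGraph V) (v : V) (r : ℕ) : Set V := {u | X.dist v u ≤ r}

lemma self_mem_ball (v : V) (r : ℕ) : v ∈ ball X v r := by
  simp [ball, SimpleGraph.dist_self]

/-- A graph homomorphism does not increase distances (on a connected graph). -/
lemma dist_map_le (hXc : X.Connected) (f : V → V)
    (hf : ∀ a b, X.Adj a b → X.Adj (f a) (f b)) (u w : V) :
    X.dist (f u) (f w) ≤ X.dist u w := by
  obtain ⟨q, hq⟩ := hXc.exists_walk_length_eq_dist u w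
  have := X.dist_le (q.map ⟨f, fun h => hf _ _ h⟩)
  rwa [SimpleGraph.Walk.length_map, hq] at this

lemma dist_iso (hXc : X.Connected) (φ : X ≃g X) (u w : V) :
    X.dist (φ u) (φ w) = X.dist u w := by
  refine le_antisymm (dist_map_le hXc φ (fun a b h => φ.map_adj_iff.2 h) u w) ?_
  have := dist_map_le hXc φ.symm (fun a b h => φ.symm.map_adj_iff.2 h) (φ u) (φ w)
  simpa using this

lemma iso_image_ball (hXc : X.Connected) (φ : X ≃g X) (v : V) (r : ℕ) :
    φ '' ball X v r = ball X (φ v) r := by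
  ext w
  constructor
  · rintro ⟨u, hu, rfl⟩
    simpa [ball, dist_iso hXc φ] using hu
  · intro hw
    refine ⟨φ.symm w, ?_, by simp⟩
    have : X.dist (φ.symm (φ v)) (φ.symm w) ≤ r := by
      rw [dist_iso hXc φ.symm]; exact hw
    simpa [ball] using this

lemma ball_ncard_eq (hXt : VertexTransitive X) (hXc : X.Connected) (u w : V) (r : ℕ) :
    (ball X u r).ncard = (ball X w r).ncard := by
  obtain ⟨φ, hφ⟩ := hXt u w
  rw [← hφ, ← iso_image_ball hXc φ u r,
    Set.ncard_image_of_injective _ φ.injective]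

lemma ball_finite (hXlf : ∀ v, (X.neighborSet v).Finite) (hXc : X.Connected)
    (v : V) (r : ℕ) : (ball X v r).Finite := by
  induction r with
  | zero =>
    have : ball X v 0 ⊆ {v} := by
      intro u hu
      have : X.dist v u = 0 := Nat.le_zero.mp hu
      have := (hXc.dist_eq_zero_iff).1 this
      simp [this]
    exact (Set.finite_singleton v).subset this
  | succ r ih =>
    have hsub : ball X v (r + 1) ⊆ ball X v r ∪ ⋃ u ∈ ball X v r, X.neighborSet u := by
      intro w hw
      by_cases h : X.dist v w ≤ r
      · exact Or.inl h
      · have hne : X.dist v w ≠ 0 := by omega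
        obtain ⟨q, hq⟩ := SimpleGraph.exists_walk_of_dist_ne_zero hne
        have hlen : q.reverse.length = X.dist v w := by
          rw [SimpleGraph.Walk.length_reverse, hq]
        cases hqr : q.reverse with
        | nil =>
          rw [hqr] at hlen
          simp only [SimpleGraph.Walk.length_nil] at hlen
          omega
        | @cons a b c hab q' =>
          rw [hqr] at hlen
          simp only [SimpleGraph.Walk.length_cons] at hlen
          have hw' : X.dist v b ≤ r := by
            have := X.dist_le q'.reverse
            rw [SimpleGraph.Walk.length_reverse] at this
            have hwr : X.dist v w ≤ r + 1 := hw
            omega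
          refine Or.inr ?_
          refine Set.mem_biUnion hw' ?_
          exact hab.symm
    refine ((ih.union ?_).subset hsub)
    exact Set.Finite.biUnion ih (fun u _ => hXlf u)

lemma lift_walk (hXc : X.Connected) {p : V → V} (hp : IsGraphCovering X X p) :
    ∀ {w0 w : V} (q : X.Walk w0 w) (v : V), p v = w0 →
      ∃ u : V, p u = w ∧ X.dist v u ≤ q.length := by
  intro w0 w q
  induction q with
  | nil => exact fun v hv => ⟨v, hv, by simp⟩
  | @cons a b c hab q ih =>
    intro v hv
    have hb : b ∈ X.neighborSet (p v) := by rw [hv]; exact hab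
    obtain ⟨u1, hu1, hpu1⟩ := (hp.2 v).surjOn hb
    obtain ⟨u, hpu, hd⟩ := ih u1 hpu1
    refine ⟨u, hpu, ?_⟩
    have h1 : X.dist v u1 = 1 := SimpleGraph.dist_eq_one_iff_adj.2 hu1
    have := hXc.dist_triangle (v := u1) (u := v) (w := u)
    simp only [SimpleGraph.Walk.length_cons]
    omega

lemma surjOn_ball (hXc : X.Connected) {p : V → V} (hp : IsGraphCovering X X p)
    (v : V) (r : ℕ) : Set.SurjOn p (ball X v r) (ball X (p v) r) := by
  intro w hw
  obtain ⟨q, hq⟩ := hXc.exists_walk_length_eq_dist (p v) w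
  obtain ⟨u, hpu, hd⟩ := lift_walk hXc hp q v rfl
  exact ⟨u, by simpa [ball] using hd.trans (by rw [hq]; exact hw), hpu⟩

lemma mapsTo_ball (hXc : X.Connected) {p : V → V} (hp : IsGraphCovering X X p)
    (v : V) (r : ℕ) : Set.MapsTo p (ball X v r) (ball X (p v) r) := by
  intro u hu
  exact (dist_map_le hXc p hp.1 v u).trans hu

lemma injOn_ball (hXt : VertexTransitive X) (hXlf : ∀ v, (X.neighborSet v).Finite)
    (hXc : X.Connected) {p : V → V} (hp : IsGraphCovering X X p)
    (v : V) (r : ℕ) : Set.InjOn p (ball X v r) := by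
  have him : p '' ball X v r = ball X (p v) r :=
    Set.Subset.antisymm (mapsTo_ball hXc hp v r).image_subset (surjOn_ball hXc hp v r)
  refine Set.injOn_of_ncard_image_eq ?_ (ball_finite hXlf hXc v r)
  rw [him]
  exact (ball_ncard_eq hXt hXc (p v) v r)

end SelfCoveringAux

open SelfCoveringAux in
/-- Every self-covering map `p : X → X` of a vertex-transitive locally finite
connected graph `X` is an automorphism of `X`. -/
theorem selfCovering_is_automorphism {V : Type*} (X : SimpleGraph V)
    (hXt : VertexTransitive X) (hXlf : ∀ v, (X.neighborSet v).Finite)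
    (hXc : X.Connected) (p : V → V) (hp : IsGraphCovering X X p) :
    ∃ e : X ≃g X, ∀ v, e v = p v := by
  have hinj : Function.Injective p := by
    intro a b hab
    have ha : a ∈ ball X a (X.dist a b) := self_mem_ball a _
    have hb : b ∈ ball X a (X.dist a b) := by simp [ball]
    exact injOn_ball hXt hXlf hXc hp a (X.dist a b) ha hb hab
  have hsurj : Function.Surjective p := by
    intro w
    have hw : w ∈ ball X (p w) (X.dist (p w) w) := by simp [ball]
    obtain ⟨u, _, hu⟩ := surjOn_ball hXc hp w (X.dist (p w) w) hw
    exact ⟨u, hu⟩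
  refine ⟨⟨Equiv.ofBijective p ⟨hinj, hsurj⟩, ?_⟩, fun v => rfl⟩
  intro a b
  constructor
  · intro h
    have hb : p b ∈ X.neighborSet (p a) := h
    obtain ⟨u, hu, hpu⟩ := (hp.2 a).surjOn hb
    rwa [hinj hpu] at hu
  · exact hp.1 a b
end

section
/- An infinite finitely generated group Γ with a non-trivial torsion element has a Cayley graph whose isometry group contains an infinite subgroup; concretely, if F is a non-trivial finite subgroup of Γ and S a finite symmetric generating set, then any permutation of Γ preserving each left coset of F is an isometry of the Cayley graph (Γ, FSF), where FSF = {fsf' : f,f' ∈ F, s ∈ S}. -/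
variable {Γ : Type*} [Group Γ]

/-- Word length of `g` with respect to a generating set `T`. -/
noncomputable def wordLength (T : Set Γ) (g : Γ) : ℕ :=
  sInf {n | ∃ l : List Γ, l.length = n ∧ (∀ x ∈ l, x ∈ T) ∧ l.prod = g}

/-!
`T = FSF` satisfies `F T F ⊆ T`. In a nonempty word over such a `T` the first letter absorbs a
factor of `F` on the left and the last letter one on the right, so `a` and `f₁ a f₂` (both `≠ 1`)
are products of words of the same lengths and have the same word length. A permutation `σ`
preserving the left cosets of `F` turns `g⁻¹ h` into the sandwich `(g⁻¹ σ g)⁻¹ (g⁻¹ h) (h⁻¹ σ h)`.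
Swapping `g` with `g f` for a fixed `f ∈ F \ {1}` gives infinitely many such permutations.
-/

section Biinvariant

variable {T : Set Γ} {F : Subgroup Γ}

lemma exists_word_mul_left (hl : ∀ f ∈ F, ∀ t ∈ T, f * t ∈ T) {f : Γ} (hf : f ∈ F)
    {l : List Γ} (hne : l ≠ []) (hT : ∀ x ∈ l, x ∈ T) :
    ∃ l' : List Γ, l'.length = l.length ∧ (∀ x ∈ l', x ∈ T) ∧ l'.prod = f * l.prod := by
  obtain ⟨t, l, rfl⟩ := List.exists_cons_of_ne_nil hne
  refine ⟨(f * t) :: l, rfl, ?_, by simp [mul_assoc]⟩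
  simp only [List.mem_cons, forall_eq_or_imp] at hT ⊢
  exact ⟨hl f hf t hT.1, hT.2⟩

lemma exists_word_mul_right (hr : ∀ f ∈ F, ∀ t ∈ T, t * f ∈ T) {f : Γ} (hf : f ∈ F)
    {l : List Γ} (hne : l ≠ []) (hT : ∀ x ∈ l, x ∈ T) :
    ∃ l' : List Γ, l'.length = l.length ∧ (∀ x ∈ l', x ∈ T) ∧ l'.prod = l.prod * f := by
  obtain ⟨l, u, rfl⟩ := (List.eq_nil_or_concat l).resolve_left hne
  refine ⟨l ++ [u * f], by simp, ?_, by simp [mul_assoc]⟩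
  simp only [List.concat_eq_append, List.mem_append, List.mem_singleton] at hT ⊢
  rintro x (hx | rfl)
  · exact hT x (Or.inl hx)
  · exact hr f hf u (hT u (Or.inr rfl))

lemma exists_word_mul_mul (hl : ∀ f ∈ F, ∀ t ∈ T, f * t ∈ T)
    (hr : ∀ f ∈ F, ∀ t ∈ T, t * f ∈ T) {f₁ f₂ a : Γ} (hf₁ : f₁ ∈ F) (hf₂ : f₂ ∈ F)
    (ha : a ≠ 1) {n : ℕ} (hn : ∃ l : List Γ, l.length = n ∧ (∀ x ∈ l, x ∈ T) ∧ l.prod = a) :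
    ∃ l : List Γ, l.length = n ∧ (∀ x ∈ l, x ∈ T) ∧ l.prod = f₁ * a * f₂ := by
  obtain ⟨l, rfl, hT, rfl⟩ := hn
  have hne : l ≠ [] := by rintro rfl; exact ha List.prod_nil
  obtain ⟨l₁, hlen₁, hT₁, hprod₁⟩ := exists_word_mul_left hl hf₁ hne hT
  have hne₁ : l₁ ≠ [] := by simpa [← List.length_pos_iff, hlen₁] using hne
  obtain ⟨l₂, hlen₂, hT₂, hprod₂⟩ := exists_word_mul_right hr hf₂ hne₁ hT₁
  exact ⟨l₂, hlen₂.trans hlen₁, hT₂, hprod₂.trans (by rw [hprod₁])⟩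

lemma wordLength_mul_mul (hl : ∀ f ∈ F, ∀ t ∈ T, f * t ∈ T)
    (hr : ∀ f ∈ F, ∀ t ∈ T, t * f ∈ T) {f₁ f₂ a : Γ} (hf₁ : f₁ ∈ F) (hf₂ : f₂ ∈ F)
    (ha : a ≠ 1) (ha' : f₁ * a * f₂ ≠ 1) :
    wordLength T (f₁ * a * f₂) = wordLength T a := by
  have hcancel : f₁⁻¹ * (f₁ * a * f₂) * f₂⁻¹ = a := by group
  unfold wordLength
  congr 1
  ext n
  refine ⟨fun h => ?_, exists_word_mul_mul hl hr hf₁ hf₂ ha⟩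
  rw [← hcancel]
  exact exists_word_mul_mul hl hr (F.inv_mem hf₁) (F.inv_mem hf₂) ha' h

lemma wordLength_inv_mul_perm_apply (hl : ∀ f ∈ F, ∀ t ∈ T, f * t ∈ T)
    (hr : ∀ f ∈ F, ∀ t ∈ T, t * f ∈ T) {σ : Equiv.Perm Γ} (hσ : ∀ g : Γ, g⁻¹ * σ g ∈ F)
    (g h : Γ) : wordLength T ((σ g)⁻¹ * σ h) = wordLength T (g⁻¹ * h) := by
  obtain rfl | hgh := eq_or_ne g h
  · simp
  have hsandwich : (σ g)⁻¹ * σ h = (g⁻¹ * σ g)⁻¹ * (g⁻¹ * h) * (h⁻¹ * σ h) := by group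
  have hσgh : (σ g)⁻¹ * σ h ≠ 1 := by
    rw [Ne, inv_mul_eq_one, σ.injective.eq_iff]; exact hgh
  rw [hsandwich] at hσgh ⊢
  exact wordLength_mul_mul hl hr (F.inv_mem (hσ g)) (hσ h) (by rwa [Ne, inv_mul_eq_one]) hσgh

end Biinvariant

section Sandwich

variable {F : Subgroup Γ} {S : Set Γ}

lemma mul_mem_sandwich {f t : Γ} (hf : f ∈ F)
    (ht : t ∈ {x : Γ | ∃ f ∈ F, ∃ s ∈ S, ∃ f' ∈ F, x = f * s * f'}) :
    f * t ∈ {x : Γ | ∃ f ∈ F, ∃ s ∈ S, ∃ f' ∈ F, x = f * s * f'} := by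
  obtain ⟨f₁, hf₁, s, hs, f₂, hf₂, rfl⟩ := ht
  exact ⟨f * f₁, F.mul_mem hf hf₁, s, hs, f₂, hf₂, by group⟩

lemma sandwich_mul_mem {f t : Γ} (hf : f ∈ F)
    (ht : t ∈ {x : Γ | ∃ f ∈ F, ∃ s ∈ S, ∃ f' ∈ F, x = f * s * f'}) :
    t * f ∈ {x : Γ | ∃ f ∈ F, ∃ s ∈ S, ∃ f' ∈ F, x = f * s * f'} := by
  obtain ⟨f₁, hf₁, s, hs, f₂, hf₂, rfl⟩ := ht
  exact ⟨f₁, hf₁, s, hs, f₂ * f, F.mul_mem hf₂ hf, by group⟩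

end Sandwich

section CosetPreserving

variable {F : Subgroup Γ}

lemma inv_mul_swap_apply_mem [DecidableEq Γ] {a b : Γ} (hab : a⁻¹ * b ∈ F) (x : Γ) :
    x⁻¹ * Equiv.swap a b x ∈ F := by
  rw [Equiv.swap_apply_def]
  split_ifs with hxa hxb
  · rwa [hxa]
  · rw [hxb, ← inv_inv (b⁻¹ * a), mul_inv_rev, inv_inv]; exact F.inv_mem hab
  · rw [inv_mul_cancel]; exact F.one_mem

lemma infinite_cosetPreserving_perm [Infinite Γ] (hF : F ≠ ⊥) :
    Infinite {σ : Equiv.Perm Γ // ∀ g : Γ, g⁻¹ * σ g ∈ F} := by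
  classical
  obtain ⟨⟨f, hfF⟩, hf⟩ := Subgroup.ne_bot_iff_exists_ne_one.1 hF
  replace hf : f ≠ 1 := fun h => hf (Subtype.ext h)
  let e : Γ → {σ : Equiv.Perm Γ // ∀ g : Γ, g⁻¹ * σ g ∈ F} := fun g =>
    ⟨Equiv.swap g (g * f), inv_mul_swap_apply_mem (by rwa [inv_mul_cancel_left])⟩
  -- `e g` moves `g`, while `e g'` fixes everything outside `{g', g' * f}`.
  have hfiber : ∀ g g', e g = e g' → g ∈ ({g', g' * f} : Set Γ) := by
    intro g g' hgg'
    by_contra hg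
    simp only [Set.mem_insert_iff, Set.mem_singleton_iff, not_or] at hg
    have hmoved : Equiv.swap g' (g' * f) g = g * f := by
      simpa [e] using (congrArg (fun σ => σ.1 g) hgg').symm
    rw [Equiv.swap_apply_of_ne_of_ne hg.1 hg.2] at hmoved
    exact hf (by simpa using hmoved)
  rw [← not_finite_iff_infinite]
  intro hfin
  refine Set.infinite_univ (Set.Finite.of_finite_fibers e (Set.toFinite _) ?_)
  rintro _ ⟨g', -, rfl⟩
  exact (Set.toFinite {g', g' * f}).subset fun g hg => hfiber g g' hg.2

end CosetPreserving

theorem cosetPreserving_perm_isometry_general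
    (hΓ : Infinite Γ) (S : Finset Γ)
    (F : Subgroup Γ) (hFne : F ≠ ⊥) :
    (∀ σ : Equiv.Perm Γ, (∀ g : Γ, g⁻¹ * σ g ∈ F) →
      ∀ g h : Γ,
        wordLength {x : Γ | ∃ f ∈ F, ∃ s ∈ S, ∃ f' ∈ F, x = f * s * f'}
          ((σ g)⁻¹ * σ h)
        = wordLength {x : Γ | ∃ f ∈ F, ∃ s ∈ S, ∃ f' ∈ F, x = f * s * f'}
          (g⁻¹ * h)) ∧
    Infinite {σ : Equiv.Perm Γ // ∀ g : Γ, g⁻¹ * σ g ∈ F} :=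
  ⟨fun _ hσ => wordLength_inv_mul_perm_apply (fun _ hf _ => mul_mem_sandwich hf)
      (fun _ hf _ => sandwich_mul_mem hf) hσ,
    infinite_cosetPreserving_perm hFne⟩

/-- An infinite finitely generated group `Γ` with a non-trivial finite
subgroup `F` has a Cayley graph with a large isometry group: for the
generating set `FSF = {f s f' : f, f' ∈ F, s ∈ S}`, every permutation of `Γ`
preserving each left coset of `F` is an isometry of the Cayley graph
`(Γ, FSF)`, and there are infinitely many such permutations. -/
theorem cosetPreserving_perm_isometry
    (hΓ : Infinite Γ) (S : Finset Γ) (hsymm : ∀ s ∈ S, s⁻¹ ∈ S)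
    (hgen : Subgroup.closure (S : Set Γ) = ⊤)
    (F : Subgroup Γ) (hFfin : (F : Set Γ).Finite) (hFne : F ≠ ⊥) :
    (∀ σ : Equiv.Perm Γ, (∀ g : Γ, g⁻¹ * σ g ∈ F) →
      ∀ g h : Γ,
        wordLength {x : Γ | ∃ f ∈ F, ∃ s ∈ S, ∃ f' ∈ F, x = f * s * f'}
          ((σ g)⁻¹ * σ h)
        = wordLength {x : Γ | ∃ f ∈ F, ∃ s ∈ S, ∃ f' ∈ F, x = f * s * f'}
          (g⁻¹ * h)) ∧
    Infinite {σ : Equiv.Perm Γ // ∀ g : Γ, g⁻¹ * σ g ∈ F} :=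
  cosetPreserving_perm_isometry_general hΓ S F hFne
end

section
/- Let Γ be an infinite, torsion-free, finitely generated group with finite symmetric generating set S, and let X be the Cayley graph (Γ, S). Then the isometry group of X has no non-trivial compact (equivalently, for graphs, no non-trivial finite-orbit) normal subgroup: if K is a normal subgroup of Isom(X) such that some vertex x has Kx ≠ {x} and all K-orbits are finite, a contradiction arises. In particular, any normal subgroup of Isom(X) all of whose vertex-orbits are finite must act trivially. -/
/-!
If `σ ∈ K` moves a vertex `x` to `g x`, then conjugating `K` by the left translation `g` shows
that `K` also maps `x` to `g (g x)`, and inductively to every `gⁿ x`. The finite orbit `K x`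
therefore contains the whole forward orbit of `x` under `g`, so `g` has finite order and
torsion-freeness forces `g = 1`, i.e. `σ x = x`.
-/

variable {Γ : Type*} [Group Γ]

/-- The Cayley graph of `Γ` with respect to a (symmetric) set `S`. -/
def cayleyGraph (Γ : Type*) [Group Γ] (S : Set Γ) : SimpleGraph Γ where
  Adj g h := g ≠ h ∧ (g⁻¹ * h ∈ S ∨ h⁻¹ * g ∈ S)
  symm := by
    refine ⟨?_⟩
    rintro g h ⟨hne, h1⟩
    exact ⟨hne.symm, h1.symm⟩
  loopless := by refine ⟨?_⟩; rintro g ⟨hne, -⟩; exact hne rfl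

theorem isOfFinOrder_of_finite_range_pow_mul {M : Type*} [CancelMonoid M] {g : M} (x : M)
    (hfin : (Set.range fun n : ℕ => g ^ n * x).Finite) : IsOfFinOrder g := by
  by_contra h
  exact Set.infinite_range_of_injective
    ((mul_left_injective x).comp (injective_pow_iff_not_isOfFinOrder.2 h)) hfin

def cayleyGraph.mulLeft (S : Set Γ) (a : Γ) : cayleyGraph Γ S ≃g cayleyGraph Γ S where
  toEquiv := Equiv.mulLeft a
  map_rel_iff' {g h} := by
    simp only [cayleyGraph, Equiv.coe_mulLeft, ne_eq, mul_right_inj, mul_inv_rev, mul_assoc,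
      inv_mul_cancel_left]

@[simp]
theorem cayleyGraph.coe_mulLeft (S : Set Γ) (a : Γ) : ⇑(cayleyGraph.mulLeft S a) = (a * ·) :=
  rfl

section RelIsoOrbit

variable {α : Type*} {r : α → α → Prop}

def relIsoOrbit (K : Set (r ≃r r)) (x : α) : Set α := {y | ∃ σ ∈ K, σ x = y}

variable {K : Set (r ≃r r)}
  (hK_id : RelIso.refl r ∈ K)
  (hK_mul : ∀ σ τ, σ ∈ K → τ ∈ K → σ.trans τ ∈ K)
  (hK_normal : ∀ (φ : r ≃r r), ∀ σ ∈ K, (φ.symm.trans σ).trans φ ∈ K)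
include hK_mul hK_normal

theorem apply_mem_relIsoOrbit {σ φ : r ≃r r} (hσ : σ ∈ K) {x y : α} (hφ : φ x = σ x)
    (hy : y ∈ relIsoOrbit K x) : φ y ∈ relIsoOrbit K x := by
  obtain ⟨τ, hτ, rfl⟩ := hy
  refine ⟨σ.trans ((φ.symm.trans τ).trans φ), hK_mul _ _ hσ (hK_normal φ τ hτ), ?_⟩
  simp [← hφ]

include hK_id

theorem iterate_mem_relIsoOrbit {σ φ : r ≃r r} (hσ : σ ∈ K) {x : α} (hφ : φ x = σ x) (n : ℕ) :
    (⇑φ)^[n] x ∈ relIsoOrbit K x := by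
  induction n with
  | zero => exact ⟨RelIso.refl r, hK_id, rfl⟩
  | succ n ih =>
    rw [Function.iterate_succ_apply']
    exact apply_mem_relIsoOrbit hK_mul hK_normal hσ hφ ih

end RelIsoOrbit

theorem no_nontrivial_finite_orbit_normal_subgroup_general
    (htf : ∀ g : Γ, g ≠ 1 → ¬ IsOfFinOrder g)
    (S : Finset Γ)
    (K : Set (cayleyGraph Γ (S : Set Γ) ≃g cayleyGraph Γ (S : Set Γ)))
    (hK_id : RelIso.refl _ ∈ K)
    (hK_mul : ∀ σ τ, σ ∈ K → τ ∈ K → σ.trans τ ∈ K)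
    (hK_normal : ∀ (φ : cayleyGraph Γ (S : Set Γ) ≃g cayleyGraph Γ (S : Set Γ)),
      ∀ σ ∈ K, (φ.symm.trans σ).trans φ ∈ K)
    (horb : ∀ x : Γ, {y : Γ | ∃ σ ∈ K, σ x = y}.Finite) :
    ∀ σ ∈ K, ∀ x : Γ, σ x = x := by
  intro σ hσ x
  set g := σ x * x⁻¹
  have hφ : cayleyGraph.mulLeft (S : Set Γ) g x = σ x := by simp [g]
  have hfin : (Set.range fun n : ℕ => g ^ n * x).Finite := by
    refine (horb x).subset ?_
    rintro _ ⟨n, rfl⟩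
    have := iterate_mem_relIsoOrbit hK_id hK_mul hK_normal hσ hφ n
    rwa [cayleyGraph.coe_mulLeft, mul_left_iterate_apply] at this
  have hg : g = 1 := by
    by_contra hg
    exact htf g hg (isOfFinOrder_of_finite_range_pow_mul x hfin)
  exact mul_inv_eq_one.1 hg

/-- Let `Γ` be an infinite, torsion-free, finitely generated group with finite
symmetric generating set `S`, and `X = (Γ, S)` its Cayley graph. Any normal
subgroup `K` of the isometry (automorphism) group of `X` all of whose
vertex-orbits are finite acts trivially; in particular `Isom(X)` has no
non-trivial compact normal subgroup. -/
theorem no_nontrivial_finite_orbit_normal_subgroup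
    (hΓinf : Infinite Γ)
    (htf : ∀ g : Γ, g ≠ 1 → ¬ IsOfFinOrder g)
    (S : Finset Γ) (hsymm : ∀ s ∈ S, s⁻¹ ∈ S) (hid : (1 : Γ) ∉ S)
    (hgen : Subgroup.closure (S : Set Γ) = ⊤)
    (K : Set (cayleyGraph Γ (S : Set Γ) ≃g cayleyGraph Γ (S : Set Γ)))
    (hK_id : RelIso.refl _ ∈ K)
    (hK_mul : ∀ σ τ, σ ∈ K → τ ∈ K → σ.trans τ ∈ K)
    (hK_inv : ∀ σ, σ ∈ K → σ.symm ∈ K)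
    (hK_normal : ∀ (φ : cayleyGraph Γ (S : Set Γ) ≃g cayleyGraph Γ (S : Set Γ)),
      ∀ σ ∈ K, (φ.symm.trans σ).trans φ ∈ K)
    (horb : ∀ x : Γ, {y : Γ | ∃ σ ∈ K, σ x = y}.Finite) :
    ∀ σ ∈ K, ∀ x : Γ, σ x = x :=
  no_nontrivial_finite_orbit_normal_subgroup_general htf S K hK_id hK_mul hK_normal horb
end

section
/- Let G = F_{p₁} × F_{p₂} be a product of free groups of ranks p₁, p₂ ≥ 2, and let u : G → ℤ be a homomorphism nonzero on each factor (e.g., sending each of the p₁ + p₂ standard generators to 1). Then H²(ker u, ℤ/2ℤ) is infinite. -/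
/-!
Let `d₁ : F₁ → 𝔽₂[T,T⁻¹]` be a Fox derivative twisted by `u` (a crossed homomorphism for the
action of `F₁` through `Tᵘ`), and `d₂` one on `F₂`. On `ker u` the twists of the two factors
cancel, so the cup product of `d₂` and `d₁`, paired with `γ ∈ 𝔽₂[T,T⁻¹]` via the constant
coefficient, is a 2-cocycle `c_γ`. With trivial coefficients a coboundary is symmetric on
commuting pairs. Rank `≥ 2` provides `a` with `u(a) > 0`, `d₁(a) = 0`, and a commutator `w` with
`d₁(w) ≠ 0`; then `g = aⁿ w a⁻ⁿ` and any `h ∈ F₂ ∩ ker u` commute, `c_γ(g, h) = 0`, while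
`c_γ(h, g)` is a coefficient of `γ Tⁿᵘ⁽ᵃ⁾ d₂(h) d₁(w)`. Taking `γ = T^(-v - N u(a))`, with `v` the
lowest exponent of `d₂(h) d₁(w)`, gives infinitely many pairwise non-cohomologous cocycles.
-/

open LaurentPolynomial groupCohomology
open scoped commutatorElement

universe u

noncomputable section

namespace LaurentPolynomial

variable {k : Type*} [CommRing k]

lemma coeff_T_mul (m n : ℤ) (f : k[T;T⁻¹]) : (T m * f).coeff n = f.coeff (n - m) := by
  rw [T, AddMonoidAlgebra.coeff_single_mul_apply, one_mul, neg_add_eq_sub]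

lemma T_ne_one [Nontrivial k] {e : ℤ} (he : e ≠ 0) : (T e : k[T;T⁻¹]) ≠ 1 := by
  intro h
  simpa [← T_zero, eq_comm, he] using congrArg (fun f : k[T;T⁻¹] => f.coeff e) h

lemma exists_coeff_ne_zero_forall_lt_eq_zero {f : k[T;T⁻¹]} (hf : f ≠ 0) :
    ∃ v, f.coeff v ≠ 0 ∧ ∀ s < v, f.coeff s = 0 := by
  have hne : f.coeff.support.Nonempty :=
    Finsupp.support_nonempty_iff.2 (mt AddMonoidAlgebra.coeff_eq_zero.1 hf)
  refine ⟨_, Finsupp.mem_support_iff.1 (Finset.min'_mem _ hne), fun s hs => ?_⟩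
  by_contra h
  exact (Finset.min'_le _ s (Finsupp.mem_support_iff.2 h)).not_gt hs

end LaurentPolynomial

/-- The semidirect product `k[T,T⁻¹] ⋊ ℤ`, with `(d, n)` acting by `r ↦ d + Tⁿ r`. For a
homomorphism `φ : G →* AffineLaurent k`, `g ↦ (φ g).d` is a crossed homomorphism for the action of
`G` on `k[T,T⁻¹]` through `Tⁿ`. -/
@[ext] structure AffineLaurent (k : Type*) [CommRing k] where
  d : k[T;T⁻¹]
  n : ℤ

namespace AffineLaurent

variable {k : Type*} [CommRing k]

instance : Mul (AffineLaurent k) := ⟨fun x y => ⟨x.d + T x.n * y.d, x.n + y.n⟩⟩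
instance : One (AffineLaurent k) := ⟨⟨0, 0⟩⟩
instance : Inv (AffineLaurent k) := ⟨fun x => ⟨-(T (-x.n) * x.d), -x.n⟩⟩

@[simp] lemma mul_d (x y : AffineLaurent k) : (x * y).d = x.d + T x.n * y.d := rfl
@[simp] lemma mul_n (x y : AffineLaurent k) : (x * y).n = x.n + y.n := rfl
@[simp] lemma one_d : (1 : AffineLaurent k).d = 0 := rfl
@[simp] lemma one_n : (1 : AffineLaurent k).n = 0 := rfl
@[simp] lemma inv_d (x : AffineLaurent k) : x⁻¹.d = -(T (-x.n) * x.d) := rfl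
@[simp] lemma inv_n (x : AffineLaurent k) : x⁻¹.n = -x.n := rfl

instance : Group (AffineLaurent k) where
  mul_assoc x y z := by ext : 1 <;> simp only [mul_d, mul_n, T_add] <;> ring
  one_mul x := by ext : 1 <;> simp [T_zero]
  mul_one x := by ext : 1 <;> simp
  inv_mul_cancel x := by ext : 1 <;> simp

def nHom : AffineLaurent k →* Multiplicative ℤ where
  toFun x := .ofAdd x.n
  map_one' := rfl
  map_mul' _ _ := rfl

@[simp] lemma nHom_apply (x : AffineLaurent k) : nHom x = .ofAdd x.n := rfl

lemma mk_zero_pow (e : ℤ) (m : ℕ) : (⟨0, e⟩ : AffineLaurent k) ^ m = ⟨0, m * e⟩ := by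
  induction m with
  | zero => ext <;> simp
  | succ m ih => ext <;> simp [pow_succ, ih]; ring

lemma mk_zero_mul_mul_inv (m : ℤ) (x : AffineLaurent k) :
    (⟨0, m⟩ : AffineLaurent k) * x * ⟨0, m⟩⁻¹ = ⟨T m * x.d, x.n⟩ := by
  ext : 1 <;> simp

lemma commutator_mk_zero (e : ℤ) (x : AffineLaurent k) :
    ⁅(⟨0, e⟩ : AffineLaurent k), x⁆ = ⟨(T e - 1) * x.d, 0⟩ := by
  rw [commutatorElement_def, mk_zero_mul_mul_inv]
  ext : 1
  · simp only [mul_d, inv_d]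
    rw [mul_neg, ← mul_assoc, ← T_add, add_neg_cancel, T_zero]
    ring
  · simp

end AffineLaurent

section TrivialCoefficients

variable {k G A : Type u} [CommRing k] [Group G] [AddCommGroup A] [Module k A]

lemma apply_comm_of_mem_coboundaries₂ {f : G × G → A}
    (hf : f ∈ coboundaries₂ (Rep.trivial k G A)) {g h : G} (hgh : g * h = h * g) :
    f (g, h) = f (h, g) := by
  obtain ⟨x, rfl⟩ := hf
  change x h - x (g * h) + x g = x g - x (h * g) + x h
  rw [hgh]
  abel

lemma infinite_H2_trivial_of_forall_lt (F : ℕ → cocycles₂ (Rep.trivial k G A))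
    (hF : ∀ N M, N < M → ∃ g h : G, g * h = h * g ∧
      F N (g, h) - F M (g, h) ≠ F N (h, g) - F M (h, g)) :
    Infinite (H2 (Rep.trivial k G A)) := by
  refine Infinite.of_injective (fun N => H2π _ (F N)) (.of_lt_imp_ne fun N M hNM heq => ?_)
  obtain ⟨g, h, hgh, hne⟩ := hF N M hNM
  exact hne (apply_comm_of_mem_coboundaries₂ ((H2π_eq_iff _ _).1 heq) hgh)

end TrivialCoefficients

namespace AffineLaurent

variable {k G₁ G₂ : Type u} [CommRing k] [Group G₁] [Group G₂]
  (φ₁ : G₁ →* AffineLaurent k) (φ₂ : G₂ →* AffineLaurent k)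

abbrev nSum : G₁ × G₂ →* Multiplicative ℤ := (nHom.comp φ₁).coprod (nHom.comp φ₂)

lemma n_add_n_eq_zero_of_mem_ker {g : G₁ × G₂} (hg : g ∈ (nSum φ₁ φ₂).ker) :
    (φ₁ g.1).n + (φ₂ g.2).n = 0 := by
  simpa [MonoidHom.mem_ker, ← ofAdd_add] using hg

/-- The factor `T^(-n)` turns `(φ₂ ·).d` into a right crossed homomorphism, which makes this a
cup product on the kernel, where the shifts of the two factors cancel. -/
def foxCup (γ : k[T;T⁻¹]) (x : (nSum φ₁ φ₂).ker × (nSum φ₁ φ₂).ker) : k :=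
  (γ * T (-(φ₂ x.1.1.2).n) * (φ₂ x.1.1.2).d * (φ₁ x.2.1.1).d).coeff 0

lemma foxCup_mem_cocycles₂ (γ : k[T;T⁻¹]) :
    foxCup φ₁ φ₂ γ ∈ cocycles₂ (Rep.trivial k (nSum φ₁ φ₂).ker k) := by
  rw [mem_cocycles₂_iff]
  rintro g ⟨h, hh⟩ j
  simp only [foxCup, Representation.trivial_apply, Subgroup.coe_mul, Prod.snd_mul, Prod.fst_mul,
    map_mul, mul_d, mul_n, ← Finsupp.add_apply, ← AddMonoidAlgebra.coeff_add]
  congr 2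
  rw [eq_neg_of_add_eq_zero_left (n_add_n_eq_zero_of_mem_ker φ₁ φ₂ hh), neg_add, T_add]
  have hT : T (-(φ₂ g.1.2).n) * T (φ₂ g.1.2).n = (1 : k[T;T⁻¹]) := by
    rw [← T_add, neg_add_cancel, T_zero]
  linear_combination (γ * T (-(φ₂ h.2).n) * (φ₂ h.2).d * (φ₁ j.1.1).d) * hT

theorem infinite_H2_ker_nSum [NoZeroDivisors k]
    (h₁ : ∃ e > 0, ⟨0, e⟩ ∈ φ₁.range) (h₁' : ∃ D ≠ 0, ⟨D, 0⟩ ∈ φ₁.range)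
    (h₂ : ∃ E ≠ 0, ⟨E, 0⟩ ∈ φ₂.range) :
    Infinite (H2 (Rep.trivial k (nSum φ₁ φ₂).ker k)) := by
  obtain ⟨e, he, a, ha⟩ := h₁
  obtain ⟨D, hD, w, hw⟩ := h₁'
  obtain ⟨E, hE, y, hy⟩ := h₂
  obtain ⟨v, hv, hv_lt⟩ := exists_coeff_ne_zero_forall_lt_eq_zero (mul_ne_zero hE hD)
  have hφg (n : ℕ) : φ₁ (a ^ n * w * (a ^ n)⁻¹) = ⟨T (n * e) * D, 0⟩ := by
    rw [map_mul, map_mul, map_inv, map_pow, ha, hw, mk_zero_pow, mk_zero_mul_mul_inv]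
  have hg_mem (n : ℕ) : (a ^ n * w * (a ^ n)⁻¹, (1 : G₂)) ∈ (nSum φ₁ φ₂).ker := by
    simp [hφg]
  have hh_mem : ((1 : G₁), y) ∈ (nSum φ₁ φ₂).ker := by simp [hy]
  refine infinite_H2_trivial_of_forall_lt
    (fun N => ⟨foxCup φ₁ φ₂ (T (-v - N * e)), foxCup_mem_cocycles₂ φ₁ φ₂ _⟩)
    fun N M hNM => ⟨⟨_, hg_mem M⟩, ⟨_, hh_mem⟩, Subtype.ext (Prod.ext (by simp) (by simp)), ?_⟩
  have hval (N : ℕ) : foxCup φ₁ φ₂ (T (-v - N * e)) (⟨_, hh_mem⟩, ⟨_, hg_mem M⟩)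
      = (E * D).coeff (v + (N - M) * e) := by
    simp only [foxCup, hy, hφg, neg_zero, T_zero, mul_one]
    rw [show T (-v - N * e) * E * (T (M * e) * D) = T (-v - N * e + M * e) * (E * D) by
      rw [T_add]; ring, coeff_T_mul]
    congr 1
    ring
  change foxCup _ _ _ _ - foxCup _ _ _ _ ≠ foxCup _ _ _ _ - foxCup _ _ _ _
  rw [hval, hval]
  -- `v` is the lowest exponent of `E * D`, so only the `M`-th cocycle sees it.
  have hlt : v + (N - M) * e < v := by
    have : (N : ℤ) < M := by exact_mod_cast hNM
    nlinarith
  simpa [foxCup, hv_lt _ hlt] using hv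

/-- `φ` is the Fox derivative `∂/∂x_{i₁}` twisted by `α`; it sends the commutator of `x_{i₀}`
and `x_{i₁}` to the translation by `T^(α x_{i₀}) - 1`. -/
lemma exists_hom_freeGroup {ι : Type u} [Nontrivial k] [Nontrivial ι]
    {α : FreeGroup ι →* Multiplicative ℤ} (hα : α ≠ 1) :
    ∃ φ : FreeGroup ι →* AffineLaurent k, nHom.comp φ = α ∧
      (∃ e > 0, ⟨0, e⟩ ∈ φ.range) ∧ ∃ D ≠ 0, ⟨D, 0⟩ ∈ φ.range := by
  classical
  obtain ⟨i₀, hi₀⟩ : ∃ i, α (FreeGroup.of i) ≠ 1 := by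
    by_contra! h
    exact hα (FreeGroup.ext_hom _ _ (by simpa using h))
  obtain ⟨i₁, hi⟩ := exists_ne i₀
  set e := (α (FreeGroup.of i₀)).toAdd
  have he : e ≠ 0 := by simpa [e] using hi₀
  let φ : FreeGroup ι →* AffineLaurent k :=
    FreeGroup.lift fun i => ⟨if i = i₁ then 1 else 0, (α (FreeGroup.of i)).toAdd⟩
  have hφ₀ : φ (FreeGroup.of i₀) = ⟨0, e⟩ := by simp [φ, hi.symm, e]
  refine ⟨φ, FreeGroup.ext_hom _ _ fun i => by simp [φ], ?_,
    T e - 1, sub_ne_zero.2 (T_ne_one he), ⁅FreeGroup.of i₀, FreeGroup.of i₁⁆, ?_⟩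
  · rcases he.lt_or_gt with hneg | hpos
    · exact ⟨-e, by omega, (FreeGroup.of i₀)⁻¹, by ext : 1 <;> simp [hφ₀]⟩
    · exact ⟨e, hpos, FreeGroup.of i₀, hφ₀⟩
  · rw [map_commutatorElement, hφ₀, commutator_mk_zero]
    simp [φ]

end AffineLaurent

open AffineLaurent

/-- Let `G = F_{p₁} × F_{p₂}` be a product of free groups of ranks
`p₁, p₂ ≥ 2`, and let `u : G → ℤ` be a homomorphism which is nonzero on each
factor. Then `H²(ker u, ℤ/2ℤ)` is infinite. -/
theorem H2_of_kernel_infinite (p₁ p₂ : ℕ) (hp₁ : 2 ≤ p₁) (hp₂ : 2 ≤ p₂)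
    (u : FreeGroup (Fin p₁) × FreeGroup (Fin p₂) →* Multiplicative ℤ)
    (hu₁ : ∃ a : FreeGroup (Fin p₁), u (a, 1) ≠ 1)
    (hu₂ : ∃ b : FreeGroup (Fin p₂), u (1, b) ≠ 1) :
    Infinite (groupCohomology (Rep.trivial (ZMod 2) ↥u.ker (ZMod 2)) 2) := by
  have := Fin.nontrivial_iff_two_le.2 hp₁
  have := Fin.nontrivial_iff_two_le.2 hp₂
  obtain ⟨φ₁, hφ₁, h₁, h₁'⟩ := exists_hom_freeGroup (k := ZMod 2)
    (α := u.comp (.inl _ _)) fun h => hu₁.elim fun a ha => ha (DFunLike.congr_fun h a)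
  obtain ⟨φ₂, hφ₂, -, h₂⟩ := exists_hom_freeGroup (k := ZMod 2)
    (α := u.comp (.inr _ _)) fun h => hu₂.elim fun b hb => hb (DFunLike.congr_fun h b)
  have hu : nSum φ₁ φ₂ = u := by rw [nSum, hφ₁, hφ₂, MonoidHom.coprod_unique]
  rw [← hu]
  exact infinite_H2_ker_nSum φ₁ φ₂ h₁ h₁' h₂

end
end
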